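/- arXiv:1405.1102 — 3 statements merged into one kernel-verified Lean document; each statement's English description precedes it below -/
import Mathlib

section
/- Let x♮ ∈ ℝ^d, let Φ be an m × d matrix, and let y = Φ x♮ + e with ‖e‖₂ ≤ η. Let x̂ be any minimizer of f(x) subject to ‖Φx − y‖₂ ≤ η. Then ‖x̂ − x♮‖₂ ≤ 2η / λmin(Φ; D(f, x♮)), where λmin(Φ; K) := inf{‖Φu‖₂ : u ∈ K, ‖u‖₂ = 1} and D(f, x♮) is the descent cone of f at x♮. -/
open scoped Pointwise

/-- The descent cone of `f` at `x`. -/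
def descentCone {d : ℕ} (f : EuclideanSpace ℝ (Fin d) → EReal)
    (x : EuclideanSpace ℝ (Fin d)) : Set (EuclideanSpace ℝ (Fin d)) :=
  ⋃ τ ∈ Set.Ioi (0 : ℝ), {u | f (x + τ • u) ≤ f x}

/-- The minimum conic singular value of a linear map `Φ` with respect to a cone `K`. -/
noncomputable def minConicSingularValue {d m : ℕ}
    (Φ : EuclideanSpace ℝ (Fin d) →ₗ[ℝ] EuclideanSpace ℝ (Fin m))
    (K : Set (EuclideanSpace ℝ (Fin d))) : ℝ :=
  sInf {r : ℝ | ∃ u ∈ K, ‖u‖ = 1 ∧ r = ‖Φ u‖}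

/-!
The error `u = x̂ - x♮` lies in the descent cone `D(f, x♮)`, because `x♮` is feasible and
hence `f x̂ ≤ f x♮`. Both `x̂` and `x♮` lie in the tube `‖Φ x - y‖ ≤ η`, so `‖Φ u‖ ≤ 2η`,
while `λmin(Φ; D) ‖u‖ ≤ ‖Φ u‖` by definition of `λmin`, applied to the unit vector `u / ‖u‖`.
-/

section DescentCone

variable {d : ℕ} {f : EuclideanSpace ℝ (Fin d) → EReal} {x : EuclideanSpace ℝ (Fin d)}

theorem sub_mem_descentCone {x' : EuclideanSpace ℝ (Fin d)} (h : f x' ≤ f x) :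
    x' - x ∈ descentCone f x :=
  Set.mem_biUnion (Set.mem_Ioi.2 one_pos) (by simpa using h)

theorem smul_mem_descentCone {c : ℝ} (hc : 0 < c) {u : EuclideanSpace ℝ (Fin d)}
    (hu : u ∈ descentCone f x) : c • u ∈ descentCone f x := by
  obtain ⟨τ, hτ, hu⟩ := Set.mem_iUnion₂.1 hu
  refine Set.mem_biUnion (Set.mem_Ioi.2 (div_pos hτ hc)) ?_
  simpa [smul_smul, div_mul_cancel₀ τ hc.ne'] using hu

end DescentCone

theorem minConicSingularValue_mul_norm_le {d m : ℕ}
    (Φ : EuclideanSpace ℝ (Fin d) →ₗ[ℝ] EuclideanSpace ℝ (Fin m))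
    {K : Set (EuclideanSpace ℝ (Fin d))} (hK : ∀ c : ℝ, 0 < c → ∀ v ∈ K, c • v ∈ K)
    {u : EuclideanSpace ℝ (Fin d)} (hu : u ∈ K) :
    minConicSingularValue Φ K * ‖u‖ ≤ ‖Φ u‖ := by
  rcases eq_or_ne u 0 with rfl | hu0
  · simp
  have hpos : 0 < ‖u‖ := norm_pos_iff.2 hu0
  have hle : minConicSingularValue Φ K ≤ ‖Φ (‖u‖⁻¹ • u)‖ :=
    csInf_le ⟨0, by rintro _ ⟨v, -, -, rfl⟩; exact norm_nonneg _⟩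
      ⟨_, hK _ (inv_pos.2 hpos) u hu, norm_smul_inv_norm hu0, rfl⟩
  rw [map_smul, norm_smul, norm_inv, norm_norm, ← div_eq_inv_mul, le_div_iff₀ hpos] at hle
  exact hle

theorem deterministic_error_bound_general {d m : ℕ}
    (f : EuclideanSpace ℝ (Fin d) → EReal)
    (xnat : EuclideanSpace ℝ (Fin d))
    (Φ : EuclideanSpace ℝ (Fin d) →ₗ[ℝ] EuclideanSpace ℝ (Fin m))
    (e : EuclideanSpace ℝ (Fin m)) (η : ℝ) (he : ‖e‖ ≤ η)
    (y : EuclideanSpace ℝ (Fin m)) (hy : y = Φ xnat + e)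
    (xhat : EuclideanSpace ℝ (Fin d))
    (hfeas : ‖Φ xhat - y‖ ≤ η)
    (hopt : ∀ z : EuclideanSpace ℝ (Fin d), ‖Φ z - y‖ ≤ η → f xhat ≤ f z) :
    minConicSingularValue Φ (descentCone f xnat) * ‖xhat - xnat‖ ≤ 2 * η := by
  have hnat : ‖Φ xnat - y‖ ≤ η := by simpa [hy] using he
  calc minConicSingularValue Φ (descentCone f xnat) * ‖xhat - xnat‖
      ≤ ‖Φ (xhat - xnat)‖ :=
        minConicSingularValue_mul_norm_le Φ (fun _ hc _ hv => smul_mem_descentCone hc hv)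
          (sub_mem_descentCone (hopt xnat hnat))
    _ = ‖(Φ xhat - y) - (Φ xnat - y)‖ := by rw [map_sub, sub_sub_sub_cancel_right]
    _ ≤ η + η := norm_sub_le_of_le hfeas hnat
    _ = 2 * η := by ring

/-- Deterministic error bound for convex recovery.  When
`λmin(Φ; D(f,x♮)) = 0` the bound `‖x̂ − x♮‖ ≤ 2η/λmin` is interpreted as `+∞`,
so we state it in the equivalent product form. -/
theorem deterministic_error_bound {d m : ℕ}
    (f : EuclideanSpace ℝ (Fin d) → EReal)
    (hconv : ∀ u v : EuclideanSpace ℝ (Fin d), ∀ a b : ℝ, 0 ≤ a → 0 ≤ b → a + b = 1 →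
      f (a • u + b • v) ≤ (a : EReal) * f u + (b : EReal) * f v)
    (hproper_top : ∃ z, f z ≠ ⊤) (hproper_bot : ∀ z, f z ≠ ⊥)
    (xnat : EuclideanSpace ℝ (Fin d))
    (Φ : EuclideanSpace ℝ (Fin d) →ₗ[ℝ] EuclideanSpace ℝ (Fin m))
    (e : EuclideanSpace ℝ (Fin m)) (η : ℝ) (he : ‖e‖ ≤ η)
    (y : EuclideanSpace ℝ (Fin m)) (hy : y = Φ xnat + e)
    (xhat : EuclideanSpace ℝ (Fin d))
    (hfeas : ‖Φ xhat - y‖ ≤ η)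
    (hopt : ∀ z : EuclideanSpace ℝ (Fin d), ‖Φ z - y‖ ≤ η → f xhat ≤ f z) :
    minConicSingularValue Φ (descentCone f xnat) * ‖xhat - xnat‖ ≤ 2 * η :=
  deterministic_error_bound_general f xnat Φ e η he y hy xhat hfeas hopt
end

section
/- Let f be a proper convex function on ℝ^d and x a point where the subdifferential ∂f(x) is nonempty and does not contain 0. Then w(D(f,x))² ≤ E inf_{τ ≥ 0} dist²(g, τ·∂f(x)), where g ∼ N(0, I_d), D(f,x) is the descent cone, and w is the conic Gaussian width. -/
open MeasureTheory ProbabilityTheory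
open scoped RealInnerProductSpace Pointwise

/-- The standard Gaussian measure on `ℝ^d`. -/
noncomputable def stdGaussian (d : ℕ) : Measure (EuclideanSpace ℝ (Fin d)) :=
  (Measure.pi fun _ : Fin d => gaussianReal 0 1).map
    (EuclideanSpace.equiv (Fin d) ℝ).symm

/-- The conic Gaussian width of a cone `K ⊂ ℝ^d`. -/
noncomputable def conicGaussianWidth {d : ℕ} (K : Set (EuclideanSpace ℝ (Fin d))) : ℝ :=
  ∫ g, sSup {r : ℝ | ∃ u ∈ K, ‖u‖ = 1 ∧ r = ⟪u, g⟫} ∂(stdGaussian d)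

/-- The subdifferential of `f` at `x`. -/
def subdiff {d : ℕ} (f : EuclideanSpace ℝ (Fin d) → EReal)
    (x : EuclideanSpace ℝ (Fin d)) : Set (EuclideanSpace ℝ (Fin d)) :=
  {v | ∀ y, f x + ((⟪y - x, v⟫ : ℝ) : EReal) ≤ f y}

/-!
A unit vector `u` of the descent cone satisfies `⟪u, v⟫ ≤ 0` for every `v ∈ ∂f(x)`, hence
`⟪u, g⟫ ≤ ⟪u, g - τ • v⟫ ≤ ‖g - τ • v‖` for all `τ ≥ 0`. So the integrand of the width is bounded
pointwise by the distance from `g` to the cone `⋃ τ ≥ 0, τ • ∂f(x)`. The width is nonnegative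
because the Gaussian is symmetric, so squaring and Jensen's inequality give the claim.
-/

open Metric

lemma sq_integral_le_integral_sq {Ω : Type*} [MeasurableSpace Ω] {μ : Measure Ω}
    [IsProbabilityMeasure μ] {f : Ω → ℝ} (hf : MemLp f 2 μ) :
    (∫ ω, f ω ∂μ) ^ 2 ≤ ∫ ω, f ω ^ 2 ∂μ :=
  even_two.convexOn_pow.map_integral_le (continuous_pow 2).continuousOn isClosed_univ
    (by simp) (hf.integrable one_le_two) hf.integrable_sq

section SphericalSupport

variable {E : Type*} [NormedAddCommGroup E] [InnerProductSpace ℝ E] {K : Set E}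

noncomputable def sphericalSupport (K : Set E) (g : E) : ℝ :=
  sSup {r : ℝ | ∃ u ∈ K, ‖u‖ = 1 ∧ r = ⟪u, g⟫}

lemma le_sphericalSupport {u : E} (hu : u ∈ K) (hn : ‖u‖ = 1) (g : E) :
    ⟪u, g⟫ ≤ sphericalSupport K g := by
  refine le_csSup ⟨‖g‖, ?_⟩ ⟨u, hu, hn, rfl⟩
  rintro r ⟨v, -, hv, rfl⟩
  simpa [hv] using real_inner_le_norm v g

lemma sphericalSupport_le {g : E} {c : ℝ} (hc : 0 ≤ c) (h : ∀ u ∈ K, ‖u‖ = 1 → ⟪u, g⟫ ≤ c) :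
    sphericalSupport K g ≤ c :=
  Real.sSup_le (by rintro r ⟨u, hu, hn, rfl⟩; exact h u hu hn) hc

lemma sphericalSupport_of_not_exists (hK : ¬∃ u ∈ K, ‖u‖ = 1) :
    sphericalSupport K = 0 := by
  ext g
  have : {r : ℝ | ∃ u ∈ K, ‖u‖ = 1 ∧ r = ⟪u, g⟫} = ∅ :=
    Set.eq_empty_of_forall_notMem fun _ ⟨u, hu, hn, _⟩ => hK ⟨u, hu, hn⟩
  rw [sphericalSupport, this, Real.sSup_empty, Pi.zero_apply]

@[simp]
lemma sphericalSupport_zero : sphericalSupport K 0 = 0 :=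
  le_antisymm (sphericalSupport_le le_rfl fun u _ _ => by simp)
    (Real.sSup_nonneg (by rintro r ⟨u, -, -, rfl⟩; simp))

lemma lipschitzWith_one_sphericalSupport : LipschitzWith 1 (sphericalSupport K) := by
  rcases em (∃ u ∈ K, ‖u‖ = 1) with ⟨u₀, hu₀, hn₀⟩ | hK
  · refine LipschitzWith.of_le_add fun g g' => csSup_le ⟨_, u₀, hu₀, hn₀, rfl⟩ ?_
    rintro r ⟨u, hu, hn, rfl⟩
    have hgg' : ⟪u, g - g'⟫ ≤ dist g g' := by
      simpa [hn, dist_eq_norm] using real_inner_le_norm u (g - g')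
    have := le_sphericalSupport hu hn g'
    rw [inner_sub_right] at hgg'
    linarith
  · rw [sphericalSupport_of_not_exists hK]
    exact LipschitzWith.const' 0

lemma sphericalSupport_add_neg_nonneg (g : E) :
    0 ≤ sphericalSupport K g + sphericalSupport K (-g) := by
  rcases em (∃ u ∈ K, ‖u‖ = 1) with ⟨u, hu, hn⟩ | hK
  · have h₁ := le_sphericalSupport hu hn g
    have h₂ := le_sphericalSupport hu hn (-g)
    rw [inner_neg_right] at h₂
    linarith
  · simp [sphericalSupport_of_not_exists hK]

end SphericalSupport

section ConeDist

variable {E : Type*} [NormedAddCommGroup E] [NormedSpace ℝ E] {S : Set E}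

noncomputable def coneDist (S : Set E) (g : E) : ℝ :=
  ⨅ τ : Set.Ici (0 : ℝ), infDist g ((τ : ℝ) • S)

lemma bddBelow_range_infDist_smul (S : Set E) (g : E) :
    BddBelow (Set.range fun τ : Set.Ici (0 : ℝ) => infDist g ((τ : ℝ) • S)) :=
  ⟨0, by rintro r ⟨τ, rfl⟩; exact infDist_nonneg⟩

lemma coneDist_nonneg (g : E) : 0 ≤ coneDist S g :=
  le_ciInf fun _ => infDist_nonneg

lemma coneDist_le_infDist_smul (g : E) {τ : ℝ} (hτ : 0 ≤ τ) :
    coneDist S g ≤ infDist g (τ • S) :=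
  ciInf_le (bddBelow_range_infDist_smul S g) ⟨τ, hτ⟩

@[simp]
lemma coneDist_zero : coneDist S 0 = 0 := by
  refine le_antisymm ?_ (coneDist_nonneg 0)
  refine (coneDist_le_infDist_smul 0 le_rfl).trans_eq ?_
  rcases S.eq_empty_or_nonempty with rfl | hS
  · simp
  · rw [Set.zero_smul_set hS]
    exact infDist_zero_of_mem rfl

lemma lipschitzWith_one_coneDist : LipschitzWith 1 (coneDist S) := by
  refine LipschitzWith.of_le_add fun g g' => ?_
  rw [← sub_le_iff_le_add]
  refine le_ciInf fun τ => sub_le_iff_le_add.2 ?_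
  exact (coneDist_le_infDist_smul g τ.2).trans infDist_le_infDist_add_dist

/-- Taking the square commutes with the infimum since `√` is monotone and continuous. -/
lemma coneDist_sq (g : E) :
    coneDist S g ^ 2 = ⨅ τ : Set.Ici (0 : ℝ), infDist g ((τ : ℝ) • S) ^ 2 := by
  have hbdd : BddBelow (Set.range fun τ : Set.Ici (0 : ℝ) => infDist g ((τ : ℝ) • S) ^ 2) :=
    ⟨0, by rintro r ⟨τ, rfl⟩; positivity⟩
  have hsqrt := Monotone.map_ciInf_of_continuousAt Real.continuous_sqrt.continuousAt
    (fun _ _ h => Real.sqrt_le_sqrt h) hbdd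
  simp only [Real.sqrt_sq infDist_nonneg] at hsqrt
  rw [coneDist, ← hsqrt, Real.sq_sqrt (le_ciInf fun _ => sq_nonneg _)]

end ConeDist

section Duality

variable {E : Type*} [NormedAddCommGroup E] [InnerProductSpace ℝ E] {K S : Set E}

lemma inner_le_dist_smul {u v : E} (hu : ‖u‖ = 1) (huv : ⟪u, v⟫ ≤ 0) {τ : ℝ} (hτ : 0 ≤ τ)
    (g : E) : ⟪u, g⟫ ≤ dist g (τ • v) :=
  calc ⟪u, g⟫ = ⟪u, g - τ • v⟫ + τ * ⟪u, v⟫ := by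
        rw [inner_sub_right, real_inner_smul_right]; ring
    _ ≤ ‖g - τ • v‖ + 0 :=
        add_le_add (by simpa [hu] using real_inner_le_norm u (g - τ • v))
          (mul_nonpos_of_nonneg_of_nonpos hτ huv)
    _ = dist g (τ • v) := by rw [add_zero, dist_eq_norm]

lemma sphericalSupport_le_coneDist (hS : S.Nonempty) (hKS : ∀ u ∈ K, ∀ v ∈ S, ⟪u, v⟫ ≤ 0)
    (g : E) : sphericalSupport K g ≤ coneDist S g :=
  le_ciInf fun τ => sphericalSupport_le infDist_nonneg fun u hu hn =>
    (le_infDist hS.smul_set).2 <| by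
      rintro _ ⟨v, hv, rfl⟩
      exact inner_le_dist_smul hn (hKS u hu v hv) τ.2 g

variable [MeasurableSpace E] [BorelSpace E] {μ : Measure E}

lemma integral_sphericalSupport_nonneg [μ.IsNegInvariant]
    (hK : Integrable (sphericalSupport K) μ) :
    0 ≤ ∫ g, sphericalSupport K g ∂μ := by
  have h : 0 ≤ ∫ g, (sphericalSupport K g + sphericalSupport K (-g)) ∂μ :=
    integral_nonneg fun g => sphericalSupport_add_neg_nonneg g
  rw [integral_add hK hK.comp_neg, integral_neg_eq_self] at h
  linarith

theorem sq_integral_sphericalSupport_le [IsProbabilityMeasure μ] [μ.IsNegInvariant]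
    (hμ : MemLp id 2 μ) (hS : S.Nonempty) (hKS : ∀ u ∈ K, ∀ v ∈ S, ⟪u, v⟫ ≤ 0) :
    (∫ g, sphericalSupport K g ∂μ) ^ 2 ≤
      ∫ g, ⨅ τ : Set.Ici (0 : ℝ), infDist g ((τ : ℝ) • S) ^ 2 ∂μ := by
  have hK : MemLp (sphericalSupport K) 2 μ :=
    lipschitzWith_one_sphericalSupport.comp_memLp sphericalSupport_zero hμ
  have hS' : MemLp (coneDist S) 2 μ := lipschitzWith_one_coneDist.comp_memLp coneDist_zero hμ
  calc (∫ g, sphericalSupport K g ∂μ) ^ 2 ≤ (∫ g, coneDist S g ∂μ) ^ 2 :=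
        pow_le_pow_left₀ (integral_sphericalSupport_nonneg (hK.integrable one_le_two))
          (integral_mono (hK.integrable one_le_two) (hS'.integrable one_le_two)
            (sphericalSupport_le_coneDist hS hKS)) 2
    _ ≤ ∫ g, coneDist S g ^ 2 ∂μ := sq_integral_le_integral_sq hS'
    _ = ∫ g, ⨅ τ : Set.Ici (0 : ℝ), infDist g ((τ : ℝ) • S) ^ 2 ∂μ := by simp_rw [coneDist_sq]

end Duality

instance isNegInvariant_stdGaussian {E : Type*} [NormedAddCommGroup E] [InnerProductSpace ℝ E]
    [FiniteDimensional ℝ E] [MeasurableSpace E] [BorelSpace E] :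
    (ProbabilityTheory.stdGaussian E).IsNegInvariant :=
  ⟨stdGaussian_map (LinearIsometryEquiv.neg ℝ)⟩

lemma stdGaussian_eq (d : ℕ) :
    _root_.stdGaussian d = ProbabilityTheory.stdGaussian (EuclideanSpace ℝ (Fin d)) :=
  map_pi_eq_stdGaussian

lemma conicGaussianWidth_eq_integral {d : ℕ} (K : Set (EuclideanSpace ℝ (Fin d))) :
    conicGaussianWidth K = ∫ g, sphericalSupport K g ∂(_root_.stdGaussian d) :=
  rfl

section DescentCone

variable {d : ℕ} {f : EuclideanSpace ℝ (Fin d) → EReal} {x u v : EuclideanSpace ℝ (Fin d)}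

lemma ne_top_of_mem_subdiff (hf : ∃ z, f z ≠ ⊤) (hv : v ∈ subdiff f x) : f x ≠ ⊤ := by
  intro hx
  obtain ⟨z, hz⟩ := hf
  have hz_top := hv z
  rw [hx, EReal.top_add_coe] at hz_top
  exact hz (top_le_iff.1 hz_top)

lemma inner_nonpos_of_mem_descentCone (hx_top : f x ≠ ⊤) (hx_bot : f x ≠ ⊥)
    (hu : u ∈ descentCone f x) (hv : v ∈ subdiff f x) : ⟪u, v⟫ ≤ 0 := by
  obtain ⟨t, ht, hdesc⟩ : ∃ t : ℝ, 0 < t ∧ f (x + t • u) ≤ f x := by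
    simpa [descentCone] using hu
  lift f x to ℝ using ⟨hx_top, hx_bot⟩ with r hr
  have hsub := (hv (x + t • u)).trans hdesc
  rw [← hr, add_sub_cancel_left, real_inner_smul_left, ← EReal.coe_add,
    EReal.coe_le_coe_iff] at hsub
  nlinarith

end DescentCone

theorem width_of_descentCone_general {d : ℕ} (f : EuclideanSpace ℝ (Fin d) → EReal)
    (hproper_top : ∃ z, f z ≠ ⊤) (hproper_bot : ∀ z, f z ≠ ⊥)
    (x : EuclideanSpace ℝ (Fin d))
    (hne : (subdiff f x).Nonempty) :
    conicGaussianWidth (descentCone f x) ^ 2 ≤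
      ∫ g, (⨅ τ : Set.Ici (0 : ℝ),
        (Metric.infDist g ((τ : ℝ) • subdiff f x)) ^ 2) ∂(stdGaussian d) := by
  obtain ⟨v₀, hv₀⟩ := hne
  have hpolar : ∀ u ∈ descentCone f x, ∀ v ∈ subdiff f x, ⟪u, v⟫ ≤ 0 := fun u hu v hv =>
    inner_nonpos_of_mem_descentCone (ne_top_of_mem_subdiff hproper_top hv₀) (hproper_bot x) hu hv
  rw [conicGaussianWidth_eq_integral, stdGaussian_eq]
  exact sq_integral_sphericalSupport_le IsGaussian.memLp_two_id ⟨v₀, hv₀⟩ hpolar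

/-- The width of a descent cone is controlled by the expected squared distance
to the scaled subdifferential. -/
theorem width_of_descentCone {d : ℕ} (f : EuclideanSpace ℝ (Fin d) → EReal)
    (hconv : ∀ u v : EuclideanSpace ℝ (Fin d), ∀ a b : ℝ, 0 ≤ a → 0 ≤ b → a + b = 1 →
      f (a • u + b • v) ≤ (a : EReal) * f u + (b : EReal) * f v)
    (hproper_top : ∃ z, f z ≠ ⊤) (hproper_bot : ∀ z, f z ≠ ⊥)
    (x : EuclideanSpace ℝ (Fin d))
    (hne : (subdiff f x).Nonempty) (h0 : (0 : EuclideanSpace ℝ (Fin d)) ∉ subdiff f x) :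
    conicGaussianWidth (descentCone f x) ^ 2 ≤
      ∫ g, (⨅ τ : Set.Ici (0 : ℝ),
        (Metric.infDist g ((τ : ℝ) • subdiff f x)) ^ 2) ∂(stdGaussian d) :=
  width_of_descentCone_general f hproper_top hproper_bot x hne
end

section
/- Let g be a standard normal random variable and τ ≥ 0. Then E[(|g| − τ)₊²] ≤ exp(−τ²/2), where (a)₊ := max{a,0}. -/
open MeasureTheory ProbabilityTheory NNReal

/-!
For `x ≥ τ ≥ 0` we have `x² = τ² + (x - τ)² + 2τ(x - τ) ≥ τ² + (x - τ)²`, so the density of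
`N(0, 1)` is at most `exp (-τ² / 2)` times that of `N(τ, 1)` on the support of `(x - τ)₊²`.
Shifting `N(τ, 1)` back to `N(0, 1)` then gives
`E[(g - τ)₊²] ≤ exp (-τ² / 2) E[g₊²] = exp (-τ² / 2) / 2`, and by symmetry of `g` the two tails
`(g - τ)₊²` and `(-g - τ)₊²` of `(|g| - τ)₊²` contribute equally.
-/

lemma max_sq_add_max_neg_sq (x : ℝ) : max x 0 ^ 2 + max (-x) 0 ^ 2 = x ^ 2 := by
  rcases le_total x 0 with h | h <;> simp [h]

lemma max_abs_sub_sq {τ : ℝ} (hτ : 0 ≤ τ) (x : ℝ) :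
    max (|x| - τ) 0 ^ 2 = max (x - τ) 0 ^ 2 + max (-x - τ) 0 ^ 2 := by
  rcases le_total x 0 with h | h
  · simp [abs_of_nonpos h, show x - τ ≤ 0 by linarith]
  · simp [abs_of_nonneg h, show -x - τ ≤ 0 by linarith]

lemma integrable_max_sq_of_memLp {Ω : Type*} [MeasurableSpace Ω] {μ : Measure Ω} {g : Ω → ℝ}
    (hg : MemLp g 2 μ) : Integrable (fun x ↦ max (g x) 0 ^ 2) μ := by
  refine hg.integrable_sq.mono' ?_ (ae_of_all _ fun x ↦ ?_)
  · exact ((hg.aestronglyMeasurable.aemeasurable.max aemeasurable_const).pow_const 2)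
      |>.aestronglyMeasurable
  · rcases le_total (g x) 0 with h | h <;> simp [h, sq_nonneg]

lemma integral_max_sq_eq_half_integral_sq {μ : Measure ℝ} [μ.IsNegInvariant] (h : MemLp id 2 μ) :
    ∫ x, max x 0 ^ 2 ∂μ = (∫ x, x ^ 2 ∂μ) / 2 := by
  have hI : Integrable (fun x ↦ max x 0 ^ 2) μ := integrable_max_sq_of_memLp h
  have hsymm : ∫ x, max (-x) 0 ^ 2 ∂μ = ∫ x, max x 0 ^ 2 ∂μ :=
    integral_neg_eq_self (fun x ↦ max x 0 ^ 2) μ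
  rw [show (fun x : ℝ ↦ x ^ 2) = fun x ↦ max x 0 ^ 2 + max (-x) 0 ^ 2 from
    funext fun x ↦ (max_sq_add_max_neg_sq x).symm, integral_add hI hI.comp_neg, hsymm]
  ring

lemma gaussianPDFReal_le_exp_mul_gaussianPDFReal (v : ℝ≥0) {τ x : ℝ} (h : 0 ≤ τ * (x - τ)) :
    gaussianPDFReal 0 v x ≤ Real.exp (-τ ^ 2 / (2 * v)) * gaussianPDFReal τ v x := by
  rw [gaussianPDFReal, gaussianPDFReal, mul_left_comm, ← Real.exp_add]
  gcongr
  have key : x ^ 2 = τ ^ 2 + (x - τ) ^ 2 + 2 * (τ * (x - τ)) := by ring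
  rw [sub_zero, key, neg_add, neg_add, add_div, add_div, neg_div, neg_div, neg_div]
  have : 0 ≤ 2 * (τ * (x - τ)) / (2 * v) := by positivity
  linarith

lemma integrable_gaussianReal_iff {μ : ℝ} {v : ℝ≥0} (hv : v ≠ 0) {f : ℝ → ℝ} :
    Integrable f (gaussianReal μ v) ↔ Integrable (fun x ↦ gaussianPDFReal μ v x * f x) := by
  rw [gaussianReal_of_var_ne_zero _ hv, integrable_withDensity_iff_integrable_smul'
    (measurable_gaussianPDF μ v) (ae_of_all _ fun _ ↦ gaussianPDF_lt_top)]
  simp only [toReal_gaussianPDF, smul_eq_mul]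

lemma integral_gaussianReal_le_exp_mul_integral_gaussianReal {v : ℝ≥0} (hv : v ≠ 0) {τ : ℝ}
    {f : ℝ → ℝ} (hf_nonneg : 0 ≤ f) (hf_supp : ∀ x, f x ≠ 0 → 0 ≤ τ * (x - τ))
    (hf : Integrable f (gaussianReal τ v)) :
    ∫ x, f x ∂gaussianReal 0 v ≤ Real.exp (-τ ^ 2 / (2 * v)) * ∫ x, f x ∂gaussianReal τ v := by
  simp only [integral_gaussianReal_eq_integral_smul hv, smul_eq_mul, ← integral_const_mul]
  refine integral_mono_of_nonneg (ae_of_all _ fun x ↦ ?_)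
    (((integrable_gaussianReal_iff hv).1 hf).const_mul _) (ae_of_all _ fun x ↦ ?_)
  · exact mul_nonneg (gaussianPDFReal_nonneg _ _ _) (hf_nonneg x)
  · by_cases hx : f x = 0
    · simp [hx]
    · dsimp only
      rw [← mul_assoc]
      exact mul_le_mul_of_nonneg_right
        (gaussianPDFReal_le_exp_mul_gaussianPDFReal v (hf_supp x hx)) (hf_nonneg x)

instance isNegInvariant_gaussianReal_zero {v : ℝ≥0} : (gaussianReal 0 v).IsNegInvariant :=
  ⟨by rw [Measure.neg_def]; simpa using gaussianReal_map_neg (μ := 0) (v := v)⟩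

lemma integral_sq_gaussianReal (v : ℝ≥0) : ∫ x, x ^ 2 ∂gaussianReal 0 v = v := by
  rw [← variance_fun_id_gaussianReal (μ := 0),
    variance_of_integral_eq_zero aemeasurable_id' integral_id_gaussianReal]

lemma integrable_max_sub_sq_gaussianReal (μ τ : ℝ) (v : ℝ≥0) :
    Integrable (fun x ↦ max (x - τ) 0 ^ 2) (gaussianReal μ v) :=
  integrable_max_sq_of_memLp ((memLp_id_gaussianReal' 2 (by simp)).sub (memLp_const τ))

lemma integral_max_sub_sq_gaussianReal_le {v : ℝ≥0} (hv : v ≠ 0) {τ : ℝ} (hτ : 0 ≤ τ) :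
    ∫ x, max (x - τ) 0 ^ 2 ∂gaussianReal 0 v ≤
      Real.exp (-τ ^ 2 / (2 * v)) * ∫ x, max x 0 ^ 2 ∂gaussianReal 0 v := by
  have hshift :
      ∫ x, max (x - τ) 0 ^ 2 ∂gaussianReal τ v = ∫ x, max x 0 ^ 2 ∂gaussianReal 0 v := by
    rw [show gaussianReal τ v = (gaussianReal 0 v).map (· + τ) by
      rw [gaussianReal_map_add_const, zero_add], integral_map (by fun_prop) (by fun_prop)]
    simp
  rw [← hshift]
  refine integral_gaussianReal_le_exp_mul_integral_gaussianReal hv (fun x ↦ sq_nonneg _)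
    (fun x hx ↦ ?_) (integrable_max_sub_sq_gaussianReal τ τ v)
  have : 0 ≤ x - τ := by
    by_contra! h
    simp [max_eq_right h.le] at hx
  positivity

/-- For a standard normal `g` and `τ ≥ 0`, `E[(|g| − τ)₊²] ≤ exp(−τ²/2)`. -/
theorem gaussian_soft_threshold_moment (τ : ℝ) (hτ : 0 ≤ τ) :
    ∫ x, max (|x| - τ) 0 ^ 2 ∂(gaussianReal 0 1) ≤ Real.exp (-τ ^ 2 / 2) := by
  have hI := integrable_max_sub_sq_gaussianReal 0 τ 1
  calc ∫ x, max (|x| - τ) 0 ^ 2 ∂(gaussianReal 0 1)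
      = ∫ x, max (x - τ) 0 ^ 2 ∂(gaussianReal 0 1) +
          ∫ x, max (-x - τ) 0 ^ 2 ∂(gaussianReal 0 1) := by
        simp_rw [max_abs_sub_sq hτ]
        exact integral_add hI hI.comp_neg
    _ = 2 * ∫ x, max (x - τ) 0 ^ 2 ∂(gaussianReal 0 1) := by
        rw [integral_neg_eq_self (fun x ↦ max (x - τ) 0 ^ 2)]
        ring
    _ ≤ 2 * (Real.exp (-τ ^ 2 / (2 * 1)) * ∫ x, max x 0 ^ 2 ∂(gaussianReal 0 1)) := by
        gcongr
        exact integral_max_sub_sq_gaussianReal_le one_ne_zero hτ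
    _ = Real.exp (-τ ^ 2 / 2) := by
        rw [integral_max_sq_eq_half_integral_sq (memLp_id_gaussianReal' 2 (by simp)),
          integral_sq_gaussianReal]
        norm_num
        ring
end
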